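/- Let a finite discounted MDP be given with state space S, action space A, transition kernel T, initial state s ∈ S, and discount factor γ ∈ (0,1). For stochastic policies π and π', with induced transition matrices P_π and P_{π'} and normalized discounted state-visitation distributions d_s^π and d_s^{π'}, the visitation difference satisfies Σ_{s'∈S} | d_s^{π'}(s') − d_s^π(s') | ≤ (γ/(1−γ)) · Σ_{s'∈S} d_s^{π'}(s') · Σ_{a∈A} | π'(a|s') − π(a|s') |. -/
import Mathlib


open scoped BigOperators

/-- The row-stochastic matrix induced by a stochastic policy `π` on a transition
kernel `T`: `(P_π)_{s,s'} = Σ_a π(a|s) T(s'|s,a)`. -/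
noncomputable def polMatrix {S A : Type*} [Fintype S] [Fintype A]
    (T : S → A → S → ℝ) (π : S → A → ℝ) : Matrix S S ℝ :=
  fun s s' => ∑ a, π s a * T s a s'

/-- The normalized discounted state-visitation distribution of policy `π` from start
state `s`: `d_s^π(s') = (1-γ) Σ_{t=0}^∞ γ^t (P_π^t)_{s,s'}`. -/
noncomputable def dvisit {S A : Type*} [Fintype S] [Fintype A] [DecidableEq S]
    (T : S → A → S → ℝ) (γ : ℝ) (π : S → A → ℝ) (s s' : S) : ℝ :=
  (1 - γ) * ∑' t : ℕ, γ ^ t * (polMatrix T π ^ t) s s'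


section aux
variable {S : Type*} [Fintype S] [DecidableEq S]

lemma pow_entry_nonneg (P : Matrix S S ℝ) (h0 : ∀ i j, 0 ≤ P i j) (n : ℕ) (i j : S) :
    0 ≤ (P ^ n) i j := by
  induction n generalizing i j with
  | zero => simp [Matrix.one_apply]; positivity
  | succ n ih =>
    rw [pow_succ, Matrix.mul_apply]
    exact Finset.sum_nonneg fun k _ => mul_nonneg (ih i k) (h0 k j)

lemma pow_rowsum (P : Matrix S S ℝ) (h1 : ∀ i, ∑ j, P i j = 1) (n : ℕ) (i : S) :
    ∑ j, (P ^ n) i j = 1 := by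
  induction n generalizing i with
  | zero => simp [Matrix.one_apply]
  | succ n ih =>
    simp only [pow_succ, Matrix.mul_apply]
    rw [Finset.sum_comm]
    simp_rw [← Finset.mul_sum, h1, mul_one]
    exact ih i

lemma summable_pow (P : Matrix S S ℝ) (h0 : ∀ i j, 0 ≤ P i j) (h1 : ∀ i, ∑ j, P i j = 1)
    {γ : ℝ} (hγ0 : 0 ≤ γ) (hγ1 : γ < 1) (i j : S) :
    Summable fun t : ℕ => γ ^ t * (P ^ t) i j := by
  apply Summable.of_nonneg_of_le
    (fun t => mul_nonneg (pow_nonneg hγ0 t) (pow_entry_nonneg P h0 t i j))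
    (fun t => ?_) (summable_geometric_of_lt_one hγ0 hγ1)
  have hle : (P ^ t) i j ≤ 1 := by
    rw [← pow_rowsum P h1 t i]
    exact Finset.single_le_sum (fun k _ => pow_entry_nonneg P h0 t i k) (Finset.mem_univ j)
  calc γ ^ t * (P ^ t) i j ≤ γ ^ t * 1 :=
        mul_le_mul_of_nonneg_left hle (pow_nonneg hγ0 t)
    _ = γ ^ t := mul_one _

noncomputable def Mmat (P : Matrix S S ℝ) (γ : ℝ) : Matrix S S ℝ :=
  fun i j => ∑' t : ℕ, γ ^ t * (P ^ t) i j

lemma Mmat_nonneg (P : Matrix S S ℝ) (h0 : ∀ i j, 0 ≤ P i j) {γ : ℝ} (hγ0 : 0 ≤ γ)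
    (i j : S) : 0 ≤ Mmat P γ i j :=
  tsum_nonneg fun t => mul_nonneg (pow_nonneg hγ0 t) (pow_entry_nonneg P h0 t i j)

lemma Mmat_rowsum (P : Matrix S S ℝ) (h0 : ∀ i j, 0 ≤ P i j) (h1 : ∀ i, ∑ j, P i j = 1)
    {γ : ℝ} (hγ0 : 0 ≤ γ) (hγ1 : γ < 1) (i : S) :
    ∑ j, Mmat P γ i j = (1 - γ)⁻¹ := by
  unfold Mmat
  rw [← Summable.tsum_finsetSum (fun j _ => summable_pow P h0 h1 hγ0 hγ1 i j)]
  simp_rw [← Finset.mul_sum, pow_rowsum P h1, mul_one]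
  exact tsum_geometric_of_lt_one hγ0 hγ1

lemma Mmat_right (P : Matrix S S ℝ) (h0 : ∀ i j, 0 ≤ P i j) (h1 : ∀ i, ∑ j, P i j = 1)
    {γ : ℝ} (hγ0 : 0 ≤ γ) (hγ1 : γ < 1) :
    Mmat P γ * (1 - γ • P) = 1 := by
  ext i j
  have hkey : ∑' t : ℕ, γ ^ (t + 1) * (P ^ (t + 1)) i j
      = ∑ k, Mmat P γ i k * (γ * P k j) := by
    have : ∀ t : ℕ, γ ^ (t + 1) * (P ^ (t + 1)) i j
        = ∑ k, (γ ^ t * (P ^ t) i k) * (γ * P k j) := by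
      intro t
      rw [show (P ^ (t+1)) = P ^ t * P from pow_succ P t, Matrix.mul_apply, Finset.mul_sum]
      exact Finset.sum_congr rfl fun k _ => by ring
    simp_rw [this]
    rw [Summable.tsum_finsetSum (fun k _ => (summable_pow P h0 h1 hγ0 hγ1 i k).mul_right _)]
    apply Finset.sum_congr rfl
    intro k _
    exact tsum_mul_right
  have hzero : Mmat P γ i j = (1 : Matrix S S ℝ) i j + ∑' t : ℕ, γ ^ (t + 1) * (P ^ (t + 1)) i j := by
    unfold Mmat
    rw [Summable.tsum_eq_zero_add (summable_pow P h0 h1 hγ0 hγ1 i j)]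
    simp
  rw [Matrix.mul_apply]
  simp only [Matrix.sub_apply, Matrix.one_apply, Matrix.smul_apply, smul_eq_mul, mul_sub]
  rw [Finset.sum_sub_distrib]
  have h2 : ∑ k, Mmat P γ i k * (if k = j then (1:ℝ) else 0) = Mmat P γ i j := by
    simp [Finset.sum_ite_eq']
  rw [h2, ← hkey]
  rw [hzero, add_sub_cancel_right, Matrix.one_apply]

lemma Mmat_left (P : Matrix S S ℝ) (h0 : ∀ i j, 0 ≤ P i j) (h1 : ∀ i, ∑ j, P i j = 1)
    {γ : ℝ} (hγ0 : 0 ≤ γ) (hγ1 : γ < 1) :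
    (1 - γ • P) * Mmat P γ = 1 := by
  ext i j
  have hkey : ∑' t : ℕ, γ ^ (t + 1) * (P ^ (t + 1)) i j
      = ∑ k, (γ * P i k) * Mmat P γ k j := by
    have : ∀ t : ℕ, γ ^ (t + 1) * (P ^ (t + 1)) i j
        = ∑ k, (γ * P i k) * (γ ^ t * (P ^ t) k j) := by
      intro t
      rw [show (P ^ (t+1)) = P * P ^ t from pow_succ' P t, Matrix.mul_apply, Finset.mul_sum]
      exact Finset.sum_congr rfl fun k _ => by ring
    simp_rw [this]
    rw [Summable.tsum_finsetSum (fun k _ => (summable_pow P h0 h1 hγ0 hγ1 k j).mul_left _)]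
    apply Finset.sum_congr rfl
    intro k _
    exact tsum_mul_left
  have hzero : Mmat P γ i j = (1 : Matrix S S ℝ) i j + ∑' t : ℕ, γ ^ (t + 1) * (P ^ (t + 1)) i j := by
    unfold Mmat
    rw [Summable.tsum_eq_zero_add (summable_pow P h0 h1 hγ0 hγ1 i j)]
    simp
  rw [Matrix.mul_apply]
  simp only [Matrix.sub_apply, Matrix.one_apply, Matrix.smul_apply, smul_eq_mul, sub_mul]
  rw [Finset.sum_sub_distrib]
  have h2 : ∑ k, (if i = k then (1:ℝ) else 0) * Mmat P γ k j = Mmat P γ i j := by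
    simp [Finset.sum_ite_eq]
  rw [h2, ← hkey]
  rw [hzero, add_sub_cancel_right, Matrix.one_apply]

end aux

/-- In a finite discounted MDP, for stochastic policies `π` and `π'`, the
visitation difference from any start state `s` satisfies
`Σ_{s'} |d_s^{π'}(s') − d_s^π(s')| ≤ (γ/(1−γ)) Σ_{s'} d_s^{π'}(s') Σ_a |π'(a|s') − π(a|s')|`. -/
theorem stmt_7 {S A : Type*} [Fintype S] [Fintype A] [DecidableEq S]
    (T : S → A → S → ℝ) (hT0 : ∀ s a s', 0 ≤ T s a s') (hT1 : ∀ s a, ∑ s', T s a s' = 1)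
    (γ : ℝ) (hγ0 : 0 < γ) (hγ1 : γ < 1)
    (π π' : S → A → ℝ)
    (hπ0 : ∀ s a, 0 ≤ π s a) (hπ1 : ∀ s, ∑ a, π s a = 1)
    (hπ'0 : ∀ s a, 0 ≤ π' s a) (hπ'1 : ∀ s, ∑ a, π' s a = 1)
    (s : S) :
    ∑ s', |dvisit T γ π' s s' - dvisit T γ π s s'|
      ≤ γ / (1 - γ) * ∑ s', dvisit T γ π' s s' * ∑ a, |π' s' a - π s' a| := by
  have hγ0' : (0:ℝ) ≤ γ := hγ0.le
  have h1γ : (0:ℝ) < 1 - γ := by linarith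
  set P : Matrix S S ℝ := polMatrix T π with hPdef
  set P' : Matrix S S ℝ := polMatrix T π' with hP'def
  have hP0 : ∀ i j, 0 ≤ P i j := fun i j =>
    Finset.sum_nonneg fun a _ => mul_nonneg (hπ0 i a) (hT0 i a j)
  have hP'0 : ∀ i j, 0 ≤ P' i j := fun i j =>
    Finset.sum_nonneg fun a _ => mul_nonneg (hπ'0 i a) (hT0 i a j)
  have rowsum : ∀ (ρ : S → A → ℝ), (∀ s, ∑ a, ρ s a = 1) →
      ∀ i, ∑ j, polMatrix T ρ i j = 1 := by
    intro ρ hρ i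
    unfold polMatrix
    rw [Finset.sum_comm]
    simp_rw [← Finset.mul_sum, hT1, mul_one]
    exact hρ i
  have hP1 : ∀ i, ∑ j, P i j = 1 := rowsum π hπ1
  have hP'1 : ∀ i, ∑ j, P' i j = 1 := rowsum π' hπ'1
  set M : Matrix S S ℝ := Mmat P γ with hMdef
  set M' : Matrix S S ℝ := Mmat P' γ with hM'def
  have hM0 : ∀ i j, 0 ≤ M i j := fun i j => Mmat_nonneg P hP0 hγ0' i j
  have hM'0 : ∀ i j, 0 ≤ M' i j := fun i j => Mmat_nonneg P' hP'0 hγ0' i j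
  have hMrow : ∀ j, ∑ s₁, M j s₁ = (1 - γ)⁻¹ := fun j => Mmat_rowsum P hP0 hP1 hγ0' hγ1 j
  have hML : (1 - γ • P) * M = 1 := Mmat_left P hP0 hP1 hγ0' hγ1
  have hMR' : M' * (1 - γ • P') = 1 := Mmat_right P' hP'0 hP'1 hγ0' hγ1
  have hdiff : M' - M = γ • (M' * ((P' - P) * M)) := by
    calc M' - M = M' * ((1 - γ • P) * M) - (M' * (1 - γ • P')) * M := by
          rw [hML, hMR', mul_one, one_mul]
      _ = γ • (M' * ((P' - P) * M)) := by
          simp only [sub_mul, mul_sub, one_mul, mul_one, smul_mul_assoc, mul_smul_comm,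
            smul_sub, Matrix.mul_assoc]
          abel
  have hdv : ∀ s₁, dvisit T γ π s s₁ = (1 - γ) * M s s₁ := fun _ => rfl
  have hdv' : ∀ s₁, dvisit T γ π' s s₁ = (1 - γ) * M' s s₁ := fun _ => rfl
  -- key policy bound
  have hkey : ∀ i, ∑ j, |P' i j - P i j| ≤ ∑ a, |π' i a - π i a| := by
    intro i
    have hPe : ∀ j, P' i j - P i j = ∑ a, (π' i a - π i a) * T i a j := by
      intro j
      rw [hPdef, hP'def]
      unfold polMatrix
      rw [← Finset.sum_sub_distrib]
      exact Finset.sum_congr rfl fun a _ => by ring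
    calc ∑ j, |P' i j - P i j| ≤ ∑ j, ∑ a, |π' i a - π i a| * T i a j := by
          apply Finset.sum_le_sum
          intro j _
          rw [hPe j]
          refine (Finset.abs_sum_le_sum_abs _ _).trans (Finset.sum_le_sum fun a _ => ?_)
          rw [abs_mul, abs_of_nonneg (hT0 i a j)]
      _ = ∑ a, |π' i a - π i a| := by
          rw [Finset.sum_comm]
          simp_rw [← Finset.mul_sum, hT1, mul_one]
  -- main chain
  have hrhs : γ / (1 - γ) * ∑ s', dvisit T γ π' s s' * ∑ a, |π' s' a - π s' a|
      = γ * ∑ i, M' s i * ∑ a, |π' i a - π i a| := by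
    simp_rw [hdv']
    rw [Finset.mul_sum, Finset.mul_sum]
    apply Finset.sum_congr rfl
    intro i _
    field_simp
  rw [hrhs]
  calc ∑ s₁, |dvisit T γ π' s s₁ - dvisit T γ π s s₁|
      = ∑ s₁, (1 - γ) * (γ * |∑ i, M' s i * ∑ j, (P' i j - P i j) * M j s₁|) := by
        apply Finset.sum_congr rfl
        intro s₁ _
        rw [hdv, hdv', ← mul_sub, abs_mul, abs_of_nonneg h1γ.le]
        congr 1
        have h3 : M' s s₁ - M s s₁ = γ * ∑ i, M' s i * ∑ j, (P' i j - P i j) * M j s₁ := by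
          have h4 : M' s s₁ - M s s₁ = (γ • (M' * ((P' - P) * M))) s s₁ := by
            rw [← hdiff]; rfl
          rw [h4, Matrix.smul_apply, smul_eq_mul]
          simp only [Matrix.mul_apply, Matrix.sub_apply]
        rw [h3, abs_mul, abs_of_nonneg hγ0']
    _ ≤ ∑ s₁, (1 - γ) * (γ * ∑ i, M' s i * ∑ j, |P' i j - P i j| * M j s₁) := by
        apply Finset.sum_le_sum
        intro s₁ _
        apply mul_le_mul_of_nonneg_left _ h1γ.le
        apply mul_le_mul_of_nonneg_left _ hγ0'
        refine (Finset.abs_sum_le_sum_abs _ _).trans (Finset.sum_le_sum fun i _ => ?_)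
        rw [abs_mul, abs_of_nonneg (hM'0 s i)]
        apply mul_le_mul_of_nonneg_left _ (hM'0 s i)
        refine (Finset.abs_sum_le_sum_abs _ _).trans (Finset.sum_le_sum fun j _ => ?_)
        rw [abs_mul, abs_of_nonneg (hM0 j s₁)]
    _ = γ * ∑ i, M' s i * ∑ j, |P' i j - P i j| * ((1 - γ) * ∑ s₁, M j s₁) := by
        simp_rw [Finset.mul_sum]
        rw [Finset.sum_comm]
        refine Finset.sum_congr rfl fun i _ => ?_
        rw [Finset.sum_comm]
        exact Finset.sum_congr rfl fun j _ => Finset.sum_congr rfl fun s₁ _ => by ring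
    _ = γ * ∑ i, M' s i * ∑ j, |P' i j - P i j| := by
        congr 1
        apply Finset.sum_congr rfl
        intro i _
        congr 1
        apply Finset.sum_congr rfl
        intro j _
        rw [hMrow j, mul_inv_cancel₀ h1γ.ne', mul_one]
    _ ≤ γ * ∑ i, M' s i * ∑ a, |π' i a - π i a| := by
        apply mul_le_mul_of_nonneg_left _ hγ0'
        exact Finset.sum_le_sum fun i _ => mul_le_mul_of_nonneg_left (hkey i) (hM'0 s i)
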